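/- Let 0 < ε < 1/2 and 0 < r ≤ 1. Then for all y ∈ [1/2, 1] with y + ε < 1 and y − ε > 0, M_B(y + ε − rε, y + ε) ≤ M_B(y − ε + rε, y − ε). -/

import Mathlib

noncomputable def MB (z θ : ℝ) : ℝ :=
  z * Real.log (θ / z) + (1 - z) * Real.log ((1 - θ) / (1 - z))

/-!
By the symmetry `MB z θ = MB (1 - z) (1 - θ)`, the left-hand side is `MB (p + d) p` with
`p = 1 - y - ε` and `d = r ε`, while the right-hand side is `MB (q + d) q` with
`q = y - ε ≥ p`. The difference `s ↦ MB (q + s) q - MB (p + s) p` vanishes at `s = 0` and is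
monotone on `[0, d]`: its derivative is a difference of log-odds ratios whose sign is that of
`s (1 - p - q - s) (q - p)`, which is nonnegative as long as `p + q + d ≤ 1`.
-/

open Real Set

lemma MB_self (θ : ℝ) : MB θ θ = 0 := by
  simp [MB]

lemma MB_one_sub_one_sub (z θ : ℝ) : MB (1 - z) (1 - θ) = MB z θ := by
  simp only [MB, sub_sub_cancel]
  ring

lemma hasDerivAt_MB_left {z θ : ℝ} (hz₀ : 0 < z) (hz₁ : z < 1) (hθ₀ : 0 < θ)
    (hθ₁ : θ < 1) :
    HasDerivAt (fun z ↦ MB z θ) (log (θ / z) - log ((1 - θ) / (1 - z))) z := by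
  have hz₁' : 1 - z ≠ 0 := by linarith
  have hθ₁' : 1 - θ ≠ 0 := by linarith
  have h₁ : HasDerivAt (fun z ↦ θ / z) ((0 * z - θ * 1) / z ^ 2) z :=
    (hasDerivAt_const z θ).div (hasDerivAt_id' z) hz₀.ne'
  have h₂ : HasDerivAt (fun z ↦ (1 - θ) / (1 - z))
      ((0 * (1 - z) - (1 - θ) * -1) / (1 - z) ^ 2) z :=
    (hasDerivAt_const z (1 - θ)).div ((hasDerivAt_id' z).const_sub 1) hz₁'
  refine (((hasDerivAt_id' z).mul (h₁.log (by positivity))).add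
    (((hasDerivAt_id' z).const_sub 1).mul (h₂.log (div_ne_zero hθ₁' hz₁')))).congr_deriv ?_
  field_simp
  ring

lemma log_odds_shift_le {p q s : ℝ} (hp : 0 < p) (hpq : p ≤ q) (hs : 0 ≤ s)
    (hsum : p + q + s ≤ 1) :
    log (p / (p + s)) - log ((1 - p) / (1 - (p + s))) ≤
      log (q / (q + s)) - log ((1 - q) / (1 - (q + s))) := by
  have hq : 0 < q := hp.trans_le hpq
  have hp₀ : 0 < 1 - p := by linarith
  have hq₀ : 0 < 1 - q := by linarith
  have hp₁ : 0 < 1 - (p + s) := by linarith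
  have hq₁ : 0 < 1 - (q + s) := by linarith
  have hps : 0 < p + s := by linarith
  have hqs : 0 < q + s := by linarith
  have key : p * (1 - (p + s)) * ((q + s) * (1 - q)) ≤
      q * (1 - (q + s)) * ((p + s) * (1 - p)) := by
    rw [← sub_nonneg, show q * (1 - (q + s)) * ((p + s) * (1 - p)) -
      p * (1 - (p + s)) * ((q + s) * (1 - q)) = s * (1 - p - q - s) * (q - p) by ring]
    exact mul_nonneg (mul_nonneg hs (by linarith)) (sub_nonneg.2 hpq)
  rw [← log_div (div_pos hp hps).ne' (div_pos hp₀ hp₁).ne',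
    ← log_div (div_pos hq hqs).ne' (div_pos hq₀ hq₁).ne', div_div_div_eq, div_div_div_eq]
  refine log_le_log (div_pos (by positivity) (by positivity)) ?_
  rwa [div_le_div_iff₀ (by positivity) (by positivity)]

lemma MB_add_le_MB_add {p q d : ℝ} (hp : 0 < p) (hpq : p ≤ q) (hd : 0 ≤ d)
    (hsum : p + q + d ≤ 1) : MB (p + d) p ≤ MB (q + d) q := by
  have hq : 0 < q := hp.trans_le hpq
  have hderiv : ∀ θ, 0 < θ → θ + d < 1 → ∀ s ∈ Icc 0 d,
      HasDerivAt (fun s ↦ MB (θ + s) θ)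
        (log (θ / (θ + s)) - log ((1 - θ) / (1 - (θ + s)))) s := fun θ hθ hθd s hs ↦
    (hasDerivAt_MB_left (by linarith [hs.1]) (by linarith [hs.2]) hθ
      (by linarith)).comp_const_add θ s
  have hf : ∀ s ∈ Icc 0 d, HasDerivAt (fun s ↦ MB (q + s) q - MB (p + s) p) _ s :=
    fun s hs ↦ (hderiv q hq (by linarith) s hs).sub (hderiv p hp (by linarith) s hs)
  have hmono : MonotoneOn (fun s ↦ MB (q + s) q - MB (p + s) p) (Icc 0 d) := by
    refine monotoneOn_of_hasDerivWithinAt_nonneg (convex_Icc 0 d)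
      (fun s hs ↦ (hf s hs).continuousAt.continuousWithinAt)
      (fun s hs ↦ (hf s (interior_subset hs)).hasDerivWithinAt) fun s hs ↦ ?_
    rw [interior_Icc] at hs
    exact sub_nonneg.2 (log_odds_shift_le hp hpq hs.1.le (by linarith [hs.2]))
  simpa [MB_self] using hmono (left_mem_Icc.2 hd) (right_mem_Icc.2 hd) hd

theorem mb_upper_le_lower (ε r y : ℝ) (hε0 : 0 < ε)
    (hr0 : 0 < r) (hr1 : r ≤ 1) (hy : 1 / 2 ≤ y)
    (hyε : y + ε < 1) :
    MB (y + ε - r * ε) (y + ε) ≤ MB (y - ε + r * ε) (y - ε) := by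
  have hrε : 0 < r * ε := mul_pos hr0 hε0
  have hrε' : r * ε ≤ ε := mul_le_of_le_one_left hε0.le hr1
  rw [← MB_one_sub_one_sub, show 1 - (y + ε - r * ε) = 1 - (y + ε) + r * ε by ring]
  exact MB_add_le_MB_add (by linarith) (by linarith) hrε.le (by linarith)
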